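/- arXiv:1607.02907 — 3 statements merged into one kernel-verified Lean document; each statement's English description precedes it below -/
import Mathlib

section
/- Let V be a finite-dimensional real vector space equipped with a nondegenerate alternating bilinear form ω, an inner product g, and a linear map J : V → V with J² = −id such that g(Jx,Jy) = g(x,y) and ω(x,y) = g(x,Jy) for all x,y ∈ V. Let L ⊆ V be a subspace and set L¹ := L ∩ L^ω, L² := the g-orthogonal complement of L¹ inside L, E¹ := J(L¹), and E² := (L + E¹)^ω. Then E¹ is g-orthogonal to L, E² ∩ (L + E¹) = {0}, and V decomposes as the internal direct sum V = E¹ ⊕ E² ⊕ L¹ ⊕ L². -/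
/-!
The identities `g (J x) y = -ω x y`, `ω (J x) x = g x x` and `ω y (J y) = -g y y` of a
compatible triple do all the work. The first shows that `J` maps `L ∩ L^ω` into the
`g`-orthogonal complement of `L`. For `v = y + J x ∈ (L + E¹)^ω` with `y ∈ L`, `x ∈ L¹`,
pairing `v` with `x` gives `g x x = 0`, so `v = y ∈ L¹`, and pairing with `J y` gives `g y y = 0`.
Hence `(L + E¹) ∩ (L + E¹)^ω = 0`, and a dimension count (valid for any reflexive form) makes
`L + E¹` and its `ω`-complement complementary; `L = L¹ ⊕ L²` because `g` is anisotropic.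
-/

noncomputable section

variable {V : Type*} [AddCommGroup V] [Module ℝ V]

/-- The `ω`-orthogonal complement `L^ω = {v ∈ V : ω(v,w) = 0 for all w ∈ L}`. -/
def symplCompl (ω : V →ₗ[ℝ] V →ₗ[ℝ] ℝ) (L : Submodule ℝ V) : Submodule ℝ V where
  carrier := {v | ∀ w ∈ L, ω v w = 0}
  zero_mem' := by intro w hw; simp
  add_mem' := by
    intro x y hx hy w hw
    rw [map_add, LinearMap.add_apply, hx w hw, hy w hw, add_zero]
  smul_mem' := by
    intro c x hx w hw
    rw [map_smul, LinearMap.smul_apply, hx w hw, smul_zero]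

/-- The g-orthogonal complement of a subspace. -/
def orthCompl (g : V →ₗ[ℝ] V →ₗ[ℝ] ℝ) (L : Submodule ℝ V) : Submodule ℝ V where
  carrier := {v | ∀ w ∈ L, g v w = 0}
  zero_mem' := by intro w hw; simp
  add_mem' := by
    intro x y hx hy w hw
    rw [map_add, LinearMap.add_apply, hx w hw, hy w hw, add_zero]
  smul_mem' := by
    intro c x hx w hw
    rw [map_smul, LinearMap.smul_apply, hx w hw, smul_zero]

open LinearMap (BilinForm)

theorem symplCompl_eq_orthogonal {ω : BilinForm ℝ V} (hω : ω.IsRefl) (W : Submodule ℝ V) :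
    symplCompl ω W = ω.orthogonal W := by
  ext v
  exact ⟨fun h w hw => hω v w (h w hw), fun h w hw => hω w v (h w hw)⟩

theorem orthCompl_eq_orthogonal {g : BilinForm ℝ V} (hg : g.IsRefl) (W : Submodule ℝ V) :
    orthCompl g W = g.orthogonal W := by
  ext v
  exact ⟨fun h w hw => hg v w (h w hw), fun h w hw => hg w v (h w hw)⟩

theorem sup_symplCompl_eq_top [FiniteDimensional ℝ V] {ω : BilinForm ℝ V} (hω : ω.IsRefl)
    {W : Submodule ℝ V} (hW : symplCompl ω W ⊓ W = ⊥) : W ⊔ symplCompl ω W = ⊤ := by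
  rw [symplCompl_eq_orthogonal hω] at hW ⊢
  exact ((BilinForm.isCompl_orthogonal_iff_disjoint hω).2
    (disjoint_iff.2 (inf_comm W _ ▸ hW))).sup_eq_top

theorem disjoint_orthCompl_of_anisotropic {g : BilinForm ℝ V} (hg : ∀ x, g x x = 0 → x = 0)
    (K : Submodule ℝ V) : Disjoint K (orthCompl g K) :=
  Submodule.disjoint_def.2 fun x hx hx' => hg x (hx' x hx)

theorem sup_inf_orthCompl_of_anisotropic [FiniteDimensional ℝ V] {g : BilinForm ℝ V}
    (hg_refl : g.IsRefl) (hg : ∀ x, g x x = 0 → x = 0) {K L : Submodule ℝ V} (hKL : K ≤ L) :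
    K ⊔ L ⊓ orthCompl g K = L := by
  have hK := disjoint_orthCompl_of_anisotropic hg K
  rw [orthCompl_eq_orthogonal hg_refl] at hK ⊢
  rw [inf_comm, ← sup_inf_assoc_of_le _ hKL,
    ((BilinForm.isCompl_orthogonal_iff_disjoint hg_refl).2 hK).sup_eq_top, top_inf_eq]

theorem Submodule.eq_zero_of_add_add_add_eq_zero {R M : Type*} [Ring R] [AddCommGroup M]
    [Module R M] {A B C D : Submodule R M} (hB : Disjoint B (C ⊔ D ⊔ A))
    (hA : Disjoint A (C ⊔ D)) (hC : Disjoint C D) {a b c d : M} (ha : a ∈ A) (hb : b ∈ B)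
    (hc : c ∈ C) (hd : d ∈ D) (h : a + b + c + d = 0) : a = 0 ∧ b = 0 ∧ c = 0 ∧ d = 0 := by
  have hcd : c + d ∈ C ⊔ D := add_mem (mem_sup_left hc) (mem_sup_right hd)
  obtain ⟨rfl, -⟩ := disjoint_iff_add_eq_zero.1 hB hb
    (add_mem (mem_sup_left hcd) (mem_sup_right ha)) (by rw [← h]; abel)
  obtain ⟨rfl, -⟩ := disjoint_iff_add_eq_zero.1 hA ha hcd (by rw [← h]; abel)
  obtain ⟨rfl, rfl⟩ := disjoint_iff_add_eq_zero.1 hC hc hd (by rw [← h]; abel)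
  exact ⟨rfl, rfl, rfl, rfl⟩

section CompatibleTriple

variable {ω g : BilinForm ℝ V} {J : V →ₗ[ℝ] V}

theorem g_J_apply (hJ : ∀ v, J (J v) = -v) (hJg : ∀ x y, g (J x) (J y) = g x y)
    (hωg : ∀ x y, ω x y = g x (J y)) (x y : V) : g (J x) y = -ω x y := by
  rw [← hJg, hJ, map_neg, LinearMap.neg_apply, hωg]

theorem ω_J_apply_self (hJg : ∀ x y, g (J x) (J y) = g x y) (hωg : ∀ x y, ω x y = g x (J y))
    (x : V) : ω (J x) x = g x x := by
  rw [hωg, hJg]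

theorem ω_apply_J_self (hJ : ∀ v, J (J v) = -v) (hωg : ∀ x y, ω x y = g x (J y)) (x : V) :
    ω x (J x) = -g x x := by
  rw [hωg, hJ, map_neg]

theorem g_map_J_inf_symplCompl_eq_zero (hJ : ∀ v, J (J v) = -v)
    (hJg : ∀ x y, g (J x) (J y) = g x y) (hωg : ∀ x y, ω x y = g x (J y)) (L : Submodule ℝ V) :
    ∀ x ∈ (L ⊓ symplCompl ω L).map J, ∀ y ∈ L, g x y = 0 := by
  rintro _ ⟨u, ⟨-, hu⟩, rfl⟩ y hy
  rw [g_J_apply hJ hJg hωg, hu y hy, neg_zero]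

theorem symplCompl_inf_sup_map_J_eq_bot (hω : ω.IsRefl) (hg : ∀ x, g x x = 0 → x = 0)
    (hJ : ∀ v, J (J v) = -v) (hJg : ∀ x y, g (J x) (J y) = g x y)
    (hωg : ∀ x y, ω x y = g x (J y)) (L : Submodule ℝ V) :
    symplCompl ω (L ⊔ (L ⊓ symplCompl ω L).map J) ⊓ (L ⊔ (L ⊓ symplCompl ω L).map J) = ⊥ := by
  refine (Submodule.eq_bot_iff _).2 fun v ⟨hvω, hv⟩ => ?_
  obtain ⟨y, hy, _, ⟨x, ⟨hxL, hxω⟩, rfl⟩, rfl⟩ := Submodule.mem_sup.1 hv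
  have hx : x = 0 := by
    refine hg x ?_
    have := hvω x (Submodule.mem_sup_left hxL)
    rwa [map_add, LinearMap.add_apply, hω x y (hxω y hy), ω_J_apply_self hJg hωg, zero_add]
      at this
  subst hx
  rw [map_zero, add_zero] at hvω ⊢
  have hy₁ : y ∈ L ⊓ symplCompl ω L := ⟨hy, fun w hw => hvω w (Submodule.mem_sup_left hw)⟩
  refine hg y (neg_eq_zero.1 ?_)
  rw [← ω_apply_J_self hJ hωg]
  exact hvω _ (Submodule.mem_sup_right (Submodule.mem_map_of_mem hy₁))

end CompatibleTriple

theorem stmt3_general [FiniteDimensional ℝ V]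
    (ω : V →ₗ[ℝ] V →ₗ[ℝ] ℝ) (hω_alt : ∀ v, ω v v = 0)
    (g : V →ₗ[ℝ] V →ₗ[ℝ] ℝ) (hg_symm : ∀ x y, g x y = g y x)
    (hg_posdef : ∀ x, x ≠ 0 → 0 < g x x)
    (J : V →ₗ[ℝ] V) (hJ : ∀ v, J (J v) = -v)
    (hJg : ∀ x y, g (J x) (J y) = g x y)
    (hωg : ∀ x y, ω x y = g x (J y))
    (L : Submodule ℝ V)
    (L1 : Submodule ℝ V) (hL1 : L1 = L ⊓ symplCompl ω L)
    (L2 : Submodule ℝ V) (hL2 : L2 = L ⊓ orthCompl g L1)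
    (E1 : Submodule ℝ V) (hE1 : E1 = L1.map J)
    (E2 : Submodule ℝ V) (hE2 : E2 = symplCompl ω (L ⊔ E1)) :
    (∀ x ∈ E1, ∀ y ∈ L, g x y = 0) ∧
    (E2 ⊓ (L ⊔ E1) = ⊥) ∧
    (E1 ⊔ E2 ⊔ L1 ⊔ L2 = ⊤) ∧
    (∀ a ∈ E1, ∀ b ∈ E2, ∀ c ∈ L1, ∀ d ∈ L2,
      a + b + c + d = 0 → a = 0 ∧ b = 0 ∧ c = 0 ∧ d = 0) := by
  have hω : ω.IsRefl := LinearMap.IsAlt.isRefl hω_alt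
  have hg_refl : g.IsRefl := (LinearMap.isSymm_def.2 hg_symm).isRefl
  have hg : ∀ x, g x x = 0 → x = 0 := fun x hx => by_contra fun h => (hg_posdef x h).ne' hx
  have hE1L : ∀ x ∈ E1, ∀ y ∈ L, g x y = 0 := by
    subst hL1 hE1
    exact g_map_J_inf_symplCompl_eq_zero hJ hJg hωg L
  have hE2_disj : E2 ⊓ (L ⊔ E1) = ⊥ := by
    subst hL1 hE1 hE2
    exact symplCompl_inf_sup_map_J_eq_bot hω hg hJ hJg hωg L
  have hL : L1 ⊔ L2 = L := by
    subst hL1 hL2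
    exact sup_inf_orthCompl_of_anisotropic hg_refl hg inf_le_left
  have hsup : L ⊔ E1 ⊔ E2 = ⊤ := hE2 ▸ sup_symplCompl_eq_top hω (hE2 ▸ hE2_disj)
  have hE1_disj : Disjoint E1 L :=
    Submodule.disjoint_def.2 fun x hx hxL => hg x (hE1L x hx x hxL)
  refine ⟨hE1L, hE2_disj, by rw [← hsup, ← hL]; ac_rfl, fun a ha b hb c hc d hd => ?_⟩
  rw [← hL] at hE1_disj hE2_disj
  exact Submodule.eq_zero_of_add_add_add_eq_zero (disjoint_iff.2 hE2_disj) hE1_disj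
    ((disjoint_orthCompl_of_anisotropic hg L1).mono_right (hL2.trans_le inf_le_right)) ha hb hc hd

/-- Pointwise decomposition of a fiber of a Lie algebroid induced by a
compatible triple `(ω, J, g)`, with `L` playing the role of the kernel of the anchor:
`E¹` is `g`-orthogonal to `L`, `E² ∩ (L + E¹) = 0`, and `V = E¹ ⊕ E² ⊕ L¹ ⊕ L²`
as an internal direct sum. -/
theorem stmt3 [FiniteDimensional ℝ V]
    (ω : V →ₗ[ℝ] V →ₗ[ℝ] ℝ) (hω_alt : ∀ v, ω v v = 0)
    (hω_nondeg : ∀ v, (∀ w, ω v w = 0) → v = 0)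
    (g : V →ₗ[ℝ] V →ₗ[ℝ] ℝ) (hg_symm : ∀ x y, g x y = g y x)
    (hg_posdef : ∀ x, x ≠ 0 → 0 < g x x)
    (J : V →ₗ[ℝ] V) (hJ : ∀ v, J (J v) = -v)
    (hJg : ∀ x y, g (J x) (J y) = g x y)
    (hωg : ∀ x y, ω x y = g x (J y))
    (L : Submodule ℝ V)
    (L1 : Submodule ℝ V) (hL1 : L1 = L ⊓ symplCompl ω L)
    (L2 : Submodule ℝ V) (hL2 : L2 = L ⊓ orthCompl g L1)
    (E1 : Submodule ℝ V) (hE1 : E1 = L1.map J)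
    (E2 : Submodule ℝ V) (hE2 : E2 = symplCompl ω (L ⊔ E1)) :
    (∀ x ∈ E1, ∀ y ∈ L, g x y = 0) ∧
    (E2 ⊓ (L ⊔ E1) = ⊥) ∧
    (E1 ⊔ E2 ⊔ L1 ⊔ L2 = ⊤) ∧
    (∀ a ∈ E1, ∀ b ∈ E2, ∀ c ∈ L1, ∀ d ∈ L2,
      a + b + c + d = 0 → a = 0 ∧ b = 0 ∧ c = 0 ∧ d = 0) :=
  stmt3_general ω hω_alt g hg_symm hg_posdef J hJ hJg hωg L L1 hL1 L2 hL2 E1 hE1 E2 hE2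
end
end

section
/- Let V be a finite-dimensional real vector space equipped with a nondegenerate alternating bilinear form ω, an inner product g, and a linear map J : V → V with J² = −id such that g(Jx,Jy) = g(x,y) and ω(x,y) = g(x,Jy) for all x,y ∈ V. Let L ⊆ V be a subspace and set L¹ := L ∩ L^ω, L² := the g-orthogonal complement of L¹ inside L, E¹ := J(L¹), and E² := (L + E¹)^ω. If J(L²) ⊆ L², then E² is g-orthogonal to L², and J(E²) ⊆ E². -/
noncomputable section

variable {V : Type*} [AddCommGroup V] [Module ℝ V]

/-! Since `ω(x, y) = g(x, J y)`, the `ω`-complement of a subspace `W` is the `g`-complement of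
`J(W)`; as `J E¹ = J² L¹ = L¹`, this gives `E² = (J L + L¹)^⊥`. Positive definiteness splits
`L = L¹ + L²`, and `J(L²) ⊆ L²` with `J² = -1` gives `L² ⊆ J L`. Hence `E² ⊥ L²`, and
`L + E¹ ⊆ L¹ + J L`, so that `E² ⊆ (L + E¹)^⊥`, which the isometry `J` carries into
`(J L + J E¹)^⊥ = E²`. -/

open LinearMap (BilinForm)

lemma restrict_nondegenerate_of_posDef {g : BilinForm ℝ V} (hg : ∀ x, x ≠ 0 → 0 < g x x)
    (K : Submodule ℝ V) : (BilinForm.restrict g K).Nondegenerate := by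
  refine ⟨fun a ha => ?_, fun a ha => ?_⟩ <;>
  · by_contra hne
    exact (hg a (by simpa using hne)).ne' (ha a)

section OrthCompl

variable {g : V →ₗ[ℝ] V →ₗ[ℝ] ℝ}

lemma orthCompl_anti {W W' : Submodule ℝ V} (h : W ≤ W') : orthCompl g W' ≤ orthCompl g W :=
  fun _ hx w hw => hx w (h hw)

variable (hg : ∀ x, x ≠ 0 → 0 < g x x)
include hg

lemma sup_orthCompl_eq_top_of_posDef (K : Submodule ℝ V) [FiniteDimensional ℝ K] :
    K ⊔ orthCompl g K = ⊤ := by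
  have hK := restrict_nondegenerate_of_posDef hg K
  refine eq_top_iff.2 fun w _ => Submodule.mem_sup.2 ?_
  set a : K := ((BilinForm.restrict g K).toDual hK).symm ((g w).domRestrict K)
  refine ⟨a, a.2, w - a, fun u hu => ?_, add_sub_cancel _ _⟩
  have ha : g a u = g w u :=
    BilinForm.apply_toDual_symm_apply (hB := hK) ((g w).domRestrict K) ⟨u, hu⟩
  rw [map_sub, LinearMap.sub_apply, ha, sub_self]

lemma sup_inf_orthCompl_of_le {K L : Submodule ℝ V} [FiniteDimensional ℝ K] (hKL : K ≤ L) :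
    K ⊔ L ⊓ orthCompl g K = L := by
  rw [inf_comm, ← sup_inf_assoc_of_le _ hKL, sup_orthCompl_eq_top_of_posDef hg, top_inf_eq]

end OrthCompl

section Compatible

variable {ω g : V →ₗ[ℝ] V →ₗ[ℝ] ℝ} {J : V →ₗ[ℝ] V}

lemma symplCompl_eq_orthCompl_map (hωg : ∀ x y, ω x y = g x (J y)) (W : Submodule ℝ V) :
    symplCompl ω W = orthCompl g (W.map J) := by
  ext x
  simp [symplCompl, orthCompl, hωg]

lemma apply_mem_orthCompl_map_iff (hJg : ∀ x y, g (J x) (J y) = g x y) {W : Submodule ℝ V}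
    {x : V} : J x ∈ orthCompl g (W.map J) ↔ x ∈ orthCompl g W := by
  simp [orthCompl, hJg]

lemma le_map_map_of_sq_eq_neg (hJ : ∀ v, J (J v) = -v) (W : Submodule ℝ V) :
    W ≤ (W.map J).map J :=
  fun v hv => ⟨J (-v), ⟨-v, W.neg_mem hv, rfl⟩, by rw [hJ, neg_neg]⟩

end Compatible

theorem stmt4_general [FiniteDimensional ℝ V]
    (ω : V →ₗ[ℝ] V →ₗ[ℝ] ℝ)
    (g : V →ₗ[ℝ] V →ₗ[ℝ] ℝ)
    (hg_posdef : ∀ x, x ≠ 0 → 0 < g x x)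
    (J : V →ₗ[ℝ] V) (hJ : ∀ v, J (J v) = -v)
    (hJg : ∀ x y, g (J x) (J y) = g x y)
    (hωg : ∀ x y, ω x y = g x (J y))
    (L : Submodule ℝ V)
    (L1 : Submodule ℝ V) (hL1 : L1 = L ⊓ symplCompl ω L)
    (L2 : Submodule ℝ V) (hL2 : L2 = L ⊓ orthCompl g L1)
    (E1 : Submodule ℝ V) (hE1 : E1 = L1.map J)
    (E2 : Submodule ℝ V) (hE2 : E2 = symplCompl ω (L ⊔ E1))
    (hJL2 : ∀ v ∈ L2, J v ∈ L2) :
    (∀ x ∈ E2, ∀ y ∈ L2, g x y = 0) ∧ (∀ x ∈ E2, J x ∈ E2) := by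
  have hL1L : L1 ≤ L := hL1 ▸ inf_le_left
  have hL : L = L1 ⊔ L2 := by rw [hL2, sup_inf_orthCompl_of_le hg_posdef hL1L]
  have hL2_JL : L2 ≤ L.map J := by
    have hJL2_L : L2.map J ≤ L :=
      (Submodule.map_le_iff_le_comap.2 hJL2).trans (hL2 ▸ inf_le_left)
    exact (le_map_map_of_sq_eq_neg hJ L2).trans (Submodule.map_mono hJL2_L)
  have hE2_eq : E2 = orthCompl g (L.map J ⊔ E1.map J) := by
    rw [hE2, symplCompl_eq_orthCompl_map hωg, Submodule.map_sup]
  rw [hE2_eq]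
  refine ⟨fun x hx => orthCompl_anti (hL2_JL.trans le_sup_left) hx, fun x hx => ?_⟩
  have hL1_JE1 : L1 ≤ E1.map J := by rw [hE1]; exact le_map_map_of_sq_eq_neg hJ L1
  have hE1_JL : E1 ≤ L.map J := by rw [hE1]; exact Submodule.map_mono hL1L
  have hLE1 : L ⊔ E1 ≤ L.map J ⊔ E1.map J := by
    refine sup_le ?_ (hE1_JL.trans le_sup_left)
    nth_rewrite 1 [hL]
    exact sup_le (hL1_JE1.trans le_sup_right) (hL2_JL.trans le_sup_left)
  rw [← Submodule.map_sup, apply_mem_orthCompl_map_iff hJg]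
  exact orthCompl_anti hLE1 hx

/-- With the decomposition data of a compatible triple `(ω, J, g)` on `V`
and a subspace `L`, if `J(L²) ⊆ L²` then `E²` is `g`-orthogonal to `L²` and
`J(E²) ⊆ E²`. -/
theorem stmt4 [FiniteDimensional ℝ V]
    (ω : V →ₗ[ℝ] V →ₗ[ℝ] ℝ) (hω_alt : ∀ v, ω v v = 0)
    (hω_nondeg : ∀ v, (∀ w, ω v w = 0) → v = 0)
    (g : V →ₗ[ℝ] V →ₗ[ℝ] ℝ) (hg_symm : ∀ x y, g x y = g y x)
    (hg_posdef : ∀ x, x ≠ 0 → 0 < g x x)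
    (J : V →ₗ[ℝ] V) (hJ : ∀ v, J (J v) = -v)
    (hJg : ∀ x y, g (J x) (J y) = g x y)
    (hωg : ∀ x y, ω x y = g x (J y))
    (L : Submodule ℝ V)
    (L1 : Submodule ℝ V) (hL1 : L1 = L ⊓ symplCompl ω L)
    (L2 : Submodule ℝ V) (hL2 : L2 = L ⊓ orthCompl g L1)
    (E1 : Submodule ℝ V) (hE1 : E1 = L1.map J)
    (E2 : Submodule ℝ V) (hE2 : E2 = symplCompl ω (L ⊔ E1))
    (hJL2 : ∀ v ∈ L2, J v ∈ L2) :
    (∀ x ∈ E2, ∀ y ∈ L2, g x y = 0) ∧ (∀ x ∈ E2, J x ∈ E2) :=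
  stmt4_general ω g hg_posdef J hJ hJg hωg L L1 hL1 L2 hL2 E1 hE1 E2 hE2 hJL2
end
end

section
/- Let 𝔤 be a finite-dimensional real Lie algebra equipped with an inner product ⟨·,·⟩ satisfying ⟨[x,y],z⟩ = ⟨x,[y,z]⟩ for all x,y,z ∈ 𝔤, and let J : 𝔤 → 𝔤 be a linear map with J² = −id and ⟨Jx,Jy⟩ = ⟨x,y⟩ for all x,y ∈ 𝔤. Define ω(x,y) := ⟨x,Jy⟩, and assume ω is closed as a Lie algebra 2-cochain, i.e. ω([x,y],z) − ω([x,z],y) + ω([y,z],x) = 0 for all x,y,z ∈ 𝔤. Then 𝔤 is abelian: [x,y] = 0 for all x,y ∈ 𝔤. -/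
/-- A finite-dimensional real Lie algebra with an ad-invariant inner
product, an orthogonal complex structure `J`, and closed fundamental 2-form
`ω(x,y) = ⟨x, Jy⟩` is abelian. -/
theorem stmt7 {L : Type*} [LieRing L] [LieAlgebra ℝ L] [Module.Finite ℝ L]
    (g : L →ₗ[ℝ] L →ₗ[ℝ] ℝ)
    (hg_symm : ∀ x y, g x y = g y x)
    (hg_posdef : ∀ x, x ≠ 0 → 0 < g x x)
    (hg_inv : ∀ x y z, g ⁅x, y⁆ z = g x ⁅y, z⁆)
    (J : L →ₗ[ℝ] L) (hJ : ∀ x, J (J x) = -x)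
    (hJg : ∀ x y, g (J x) (J y) = g x y)
    (hclosed : ∀ x y z, g ⁅x, y⁆ (J z) - g ⁅x, z⁆ (J y) + g ⁅y, z⁆ (J x) = 0) :
    ∀ x y : L, ⁅x, y⁆ = 0 := by
  -- cyclic invariance of the trilinear form c(a,b,d) = g ⁅a,b⁆ d
  have hcyc : ∀ a b d : L, g ⁅a, b⁆ d = g ⁅b, d⁆ a := fun a b d =>
    (hg_inv a b d).trans (hg_symm a ⁅b, d⁆)
  have hskew : ∀ a b d : L, g ⁅a, b⁆ d = - g ⁅b, a⁆ d := by
    intro a b d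
    rw [← lie_skew a b, map_neg, LinearMap.neg_apply]
  have key : ∀ x y z : L, g ⁅x, y⁆ (J z) = 0 := by
    intro x y z
    have e0 := hclosed x y z
    have eA := hclosed x (J y) (J z)
    have eB := hclosed (J x) y (J z)
    have eC := hclosed (J x) (J y) z
    simp only [hJ, map_neg] at eA eB eC
    have a1 : g ⁅x, J y⁆ z = g ⁅z, x⁆ (J y) := by rw [hcyc, hcyc]
    have a2 : g ⁅x, J z⁆ y = g ⁅y, x⁆ (J z) := by rw [hcyc, hcyc]
    have a3 : g ⁅J y, J z⁆ (J x) = g ⁅J x, J y⁆ (J z) := by rw [hcyc, hcyc]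
    have a2' : g ⁅y, x⁆ (J z) = - g ⁅x, y⁆ (J z) := hskew _ _ _
    have b1 : g ⁅J x, y⁆ z = g ⁅y, z⁆ (J x) := hcyc _ _ _
    have b2 : g ⁅J x, J z⁆ (J y) = - g ⁅J x, J y⁆ (J z) := by
      rw [hcyc, hcyc, hskew]
    have b3 : g ⁅y, J z⁆ x = g ⁅x, y⁆ (J z) := by rw [hcyc, hcyc]
    have c1 : g ⁅J x, z⁆ y = - g ⁅y, z⁆ (J x) := by rw [hcyc, hskew]
    have c2 : g ⁅J y, z⁆ x = g ⁅z, x⁆ (J y) := hcyc _ _ _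
    have e01 : g ⁅x, z⁆ (J y) = - g ⁅z, x⁆ (J y) := hskew _ _ _
    rw [a1, a2, a2', a3] at eA
    rw [b1, b2, b3] at eB
    rw [c1, c2] at eC
    rw [e01] at e0
    linarith
  have key2 : ∀ x y z : L, g ⁅x, y⁆ z = 0 := by
    intro x y z
    have h := key x y (J z)
    rw [hJ, map_neg, neg_eq_zero] at h
    exact h
  intro x y
  by_contra h
  have hpos := hg_posdef _ h
  have hz := key2 x y ⁅x, y⁆
  linarith
end
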